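/- arXiv:1407.3631 — 7 statements merged into one kernel-verified Lean document; each statement's English description precedes it below -/
import Mathlib

section
/- M^[n−d](d, n) = C(n, d) − 1 for 0 < d < n: with test sets of size exactly n − d, the optimal worst-case number of tests to identify the d defectives equals binomial(n, d) minus one. -/
/-- An adaptive group-testing strategy on a population of `n` items:
a binary decision tree whose internal nodes test a subset (branching on
contaminated / pure) and whose leaves output a guess for the defective set. -/
inductive GTTree (n : ℕ) : Type where
  | leaf (guess : Finset (Fin n)) : GTTree n
  | node (test : Finset (Fin n)) (pos neg : GTTree n) : GTTree n

/-- Run the strategy when the true defective set is `D`. -/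
def GTTree.run {n : ℕ} (D : Finset (Fin n)) : GTTree n → Finset (Fin n)
  | .leaf g => g
  | .node t p q => if (t ∩ D).Nonempty then p.run D else q.run D

/-- Worst-case number of tests performed by the strategy. -/
def GTTree.depth {n : ℕ} : GTTree n → ℕ
  | .leaf _ => 0
  | .node _ p q => max p.depth q.depth + 1

/-- The strategy correctly identifies every possible defective set of size `d`. -/
def GTTree.Solves {n : ℕ} (T : GTTree n) (d : ℕ) : Prop :=
  ∀ D : Finset (Fin n), D.card = d → T.run D = D

/-- Every test set occurring in the tree has size exactly `k`. -/
def GTTree.SizeK {n : ℕ} (k : ℕ) : GTTree n → Prop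
  | .leaf _ => True
  | .node t p q => t.card = k ∧ p.SizeK k ∧ q.SizeK k

/-- `M d n`: optimal worst-case number of adaptive tests to find the `d`
defectives among `n` items, test sets of arbitrary size (`⊤` if unsolvable). -/
noncomputable def M (d n : ℕ) : ℕ∞ :=
  sInf {c : ℕ∞ | ∃ T : GTTree n, T.Solves d ∧ (T.depth : ℕ∞) = c}

/-- `Mfix k d n`: optimal worst-case number of adaptive tests to find the `d`
defectives among `n` items, every test set of size exactly `k` (`⊤` if unsolvable). -/
noncomputable def Mfix (k d n : ℕ) : ℕ∞ :=
  sInf {c : ℕ∞ | ∃ T : GTTree n, T.SizeK k ∧ T.Solves d ∧ (T.depth : ℕ∞) = c}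

/-!
A test of size `n - d` is pure only when it is the complement of the defective set, so its
positive branch loses at most one of the candidate `d`-sets. Following positive answers, a tree
of depth `k` therefore reaches a leaf still consistent with all but `k` candidates, and a leaf
names only one: `C(n, d) ≤ k + 1`. Conversely, testing the complements of all `d`-sets but one,
in turn, stops at the first pure test, which names the defective set.
-/

open Finset

lemma Finset.eq_compl_of_disjoint_of_card_le {α : Type*} [Fintype α] [DecidableEq α]
    {s t : Finset α} (hst : Disjoint s t) (hcard : Fintype.card α ≤ #s + #t) : t = sᶜ :=
  eq_of_subset_of_card_le (subset_compl_iff_disjoint_left.2 hst) (by rw [card_compl]; omega)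

namespace GTTree

variable {n d : ℕ}

lemma run_node_of_ne_compl {t D : Finset (Fin n)} (p q : GTTree n) (ht : #t = n - d)
    (hD : #D = d) (hne : D ≠ tᶜ) : (node t p q).run D = p.run D := by
  have hmeet : (t ∩ D).Nonempty := by
    rw [← not_disjoint_iff_nonempty_inter]
    refine fun hdisj => hne (eq_compl_of_disjoint_of_card_le hdisj ?_)
    rw [ht, hD, Fintype.card_fin]
    omega
  simp only [run, if_pos hmeet]

def complChain : List (Finset (Fin n)) → GTTree n
  | [] => leaf ∅
  | [D] => leaf D
  | D :: E :: rest => node Dᶜ (complChain (E :: rest)) (leaf D)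

lemma depth_complChain_le : ∀ l : List (Finset (Fin n)), (complChain l).depth ≤ l.length - 1
  | [] | [_] => by simp [complChain, depth]
  | D :: E :: rest => by
    have ih := depth_complChain_le (E :: rest)
    simp only [complChain, depth, List.length, Nat.max_zero] at *
    omega

lemma sizeK_complChain : ∀ l : List (Finset (Fin n)), (∀ A ∈ l, #A = d) →
    (complChain l).SizeK (n - d)
  | [], _ | [_], _ => trivial
  | D :: E :: rest, hl => by
    refine ⟨?_, sizeK_complChain (E :: rest) fun A hA => hl A (by simp [hA]), trivial⟩
    rw [card_compl, hl D (by simp), Fintype.card_fin]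

lemma run_complChain : ∀ l : List (Finset (Fin n)), (∀ A ∈ l, #A = d) →
    ∀ D ∈ l, (complChain l).run D = D
  | [], _, _, hD => absurd hD List.not_mem_nil
  | [_], _, _, hD => by
    rw [List.mem_singleton] at hD
    simp [complChain, run, hD]
  | D' :: E :: rest, hl, D, hD => by
    by_cases hDD' : D = D'
    · subst hDD'
      have hpure : Dᶜ ∩ D = ∅ := by ext; simp
      simp [complChain, run, hpure]
    · have htest : #D'ᶜ = n - d := by rw [card_compl, hl D' (by simp), Fintype.card_fin]
      rw [complChain, run_node_of_ne_compl _ _ htest (hl D hD) (by rwa [compl_compl])]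
      exact run_complChain (E :: rest) (fun A hA => hl A (by simp [hA])) D
        ((List.mem_cons.1 hD).resolve_left hDD')

lemma card_le_depth_add_one (T : GTTree n) (hT : T.SizeK (n - d)) (S : Finset (Finset (Fin n)))
    (hS : ∀ D ∈ S, #D = d) (hrun : ∀ D ∈ S, T.run D = D) : #S ≤ T.depth + 1 := by
  induction T generalizing S with
  | leaf g =>
    have hSg : S ⊆ {g} := fun D hD => mem_singleton.2 (hrun D hD).symm
    simpa [depth] using card_le_card hSg
  | node t p q ihp _ =>
    obtain ⟨ht, hp, -⟩ := hT
    have hrun_pos : ∀ D ∈ S.erase tᶜ, p.run D = D := fun D hD => by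
      have hDS := mem_of_mem_erase hD
      rw [← run_node_of_ne_compl p q ht (hS D hDS) (ne_of_mem_erase hD)]
      exact hrun D hDS
    have hpos := ihp hp (S.erase tᶜ) (fun D hD => hS D (mem_of_mem_erase hD)) hrun_pos
    have herase := pred_card_le_card_erase (s := S) (a := tᶜ)
    simp only [depth]
    omega

end GTTree

open GTTree

lemma Mfix_compl_le (d n : ℕ) : Mfix (n - d) d n ≤ ((n.choose d - 1 : ℕ) : ℕ∞) := by
  set l := (powersetCard d (univ : Finset (Fin n))).toList
  have hl : ∀ A, A ∈ l ↔ #A = d := fun A => by rw [mem_toList, mem_powersetCard_univ]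
  have hlen : l.length = n.choose d := by simp [l]
  have hsolves : (complChain l).Solves d := fun D hD =>
    run_complChain l (fun A => (hl A).1) D ((hl D).2 hD)
  have hdepth : (complChain l).depth ≤ n.choose d - 1 := hlen ▸ depth_complChain_le l
  unfold Mfix
  refine (sInf_le ?_).trans (Nat.cast_le.2 hdepth)
  exact ⟨complChain l, sizeK_complChain l fun A => (hl A).1, hsolves, rfl⟩

lemma le_Mfix_compl (d n : ℕ) : ((n.choose d - 1 : ℕ) : ℕ∞) ≤ Mfix (n - d) d n := by
  unfold Mfix
  refine le_sInf ?_
  rintro c ⟨T, hT, hsolves, rfl⟩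
  have hS : ∀ D ∈ powersetCard d (univ : Finset (Fin n)), #D = d := fun D =>
    mem_powersetCard_univ.1
  have hcard := card_le_depth_add_one T hT _ hS fun D hD => hsolves D (hS D hD)
  simp only [card_powersetCard, card_univ, Fintype.card_fin] at hcard
  exact_mod_cast Nat.sub_le_of_le_add hcard

theorem stmt6_general (d n : ℕ) :
    Mfix (n - d) d n = ((Nat.choose n d - 1 : ℕ) : ℕ∞) :=
  le_antisymm (Mfix_compl_le d n) (le_Mfix_compl d n)

theorem stmt6 (d n : ℕ) (hd1 : 0 < d) (hd2 : d < n) :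
    Mfix (n - d) d n = ((Nat.choose n d - 1 : ℕ) : ℕ∞) :=
  stmt6_general d n
end

section
/- For 0 < k < n (with n > k), M^[k](1, n) ≥ ⌈n/k⌉ − 2 + ⌈log₂(n − (⌈n/k⌉ − 2)·k)⌉: the worst-case optimal number of size-k tests to find a single defective among n items is at least this quantity. -/
/-!
An adversary answers "pure" to the first `⌈n/k⌉ - 2` tests. Each such answer removes at most `k`
candidates, so at least `r = n - (⌈n/k⌉ - 2) k > k` items remain possible defectives, and a binary
tree separating `r` singletons has depth at least `⌈log₂ r⌉`.
-/

namespace GTTree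

variable {n : ℕ}

def Locates (T : GTTree n) (S : Finset (Fin n)) : Prop :=
  ∀ i ∈ S, T.run {i} = {i}

theorem run_node_singleton_of_mem {t : Finset (Fin n)} {i : Fin n} (hi : i ∈ t)
    (p q : GTTree n) : (node t p q).run {i} = p.run {i} :=
  if_pos ⟨i, by simp [hi]⟩

theorem run_node_singleton_of_notMem {t : Finset (Fin n)} {i : Fin n} (hi : i ∉ t)
    (p q : GTTree n) : (node t p q).run {i} = q.run {i} :=
  if_neg (by simp [Finset.inter_singleton_of_notMem hi])

theorem Locates.node_pos {t S : Finset (Fin n)} {p q : GTTree n}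
    (h : (node t p q).Locates S) : p.Locates (S ∩ t) := fun i hi => by
  rw [Finset.mem_inter] at hi
  rw [← run_node_singleton_of_mem hi.2 p q]
  exact h i hi.1

theorem Locates.node_neg {t S : Finset (Fin n)} {p q : GTTree n}
    (h : (node t p q).Locates S) : q.Locates (S \ t) := fun i hi => by
  rw [Finset.mem_sdiff] at hi
  rw [← run_node_singleton_of_notMem hi.2 p q]
  exact h i hi.1

theorem Solves.locates_univ {T : GTTree n} (h : T.Solves 1) : T.Locates Finset.univ :=
  fun i _ => h {i} (Finset.card_singleton i)

theorem Locates.card_le_two_pow_depth {T : GTTree n} {S : Finset (Fin n)} (h : T.Locates S) :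
    S.card ≤ 2 ^ T.depth := by
  induction T generalizing S with
  | leaf g =>
    refine Finset.card_le_one.mpr fun a ha b hb => ?_
    have hab : ({a} : Finset (Fin n)) = {b} := (h a ha).symm.trans (h b hb)
    exact Finset.singleton_inj.mp hab
  | node t p q ihp ihq =>
    calc S.card = (S ∩ t).card + (S \ t).card := (Finset.card_inter_add_card_sdiff S t).symm
      _ ≤ 2 ^ p.depth + 2 ^ q.depth := Nat.add_le_add (ihp h.node_pos) (ihq h.node_neg)
      _ ≤ 2 ^ max p.depth q.depth + 2 ^ max p.depth q.depth := by gcongr <;> simp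
      _ = 2 ^ (node t p q).depth := by rw [depth]; ring

theorem Locates.clog_card_le_depth {T : GTTree n} {S : Finset (Fin n)} (h : T.Locates S) :
    Nat.clog 2 S.card ≤ T.depth :=
  (Nat.clog_le_iff_le_pow one_lt_two).mpr h.card_le_two_pow_depth

theorem Locates.add_clog_le_depth {k : ℕ} (j : ℕ) {T : GTTree n} (hT : T.SizeK k)
    {S : Finset (Fin n)} (h : T.Locates S) (hS : j * k + 2 ≤ S.card) :
    j + Nat.clog 2 (S.card - j * k) ≤ T.depth := by
  induction j generalizing T S with
  | zero => simpa using h.clog_card_le_depth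
  | succ j ih =>
    cases T with
    | leaf g =>
      have := h.card_le_two_pow_depth
      simp only [depth, pow_zero] at this
      omega
    | node t p q =>
      obtain ⟨htk, -, hq⟩ := hT
      have hsdiff : S.card - k ≤ (S \ t).card := htk ▸ Finset.le_card_sdiff t S
      have hcard : S.card - (j + 1) * k ≤ (S \ t).card - j * k := by
        rw [add_one_mul]; omega
      have hrec := ih hq h.node_neg (by rw [add_one_mul] at hS; omega)
      have hclog := Nat.clog_mono_right 2 hcard
      simp only [depth]
      omega

end GTTree

theorem ceil_div_sub_two_mul_add_two_le {k n : ℕ} (hk : 0 < k) (hkn : k < n) :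
    (⌈(n : ℚ) / k⌉₊ - 2) * k + 2 ≤ n := by
  set q := ⌈(n : ℚ) / k⌉₊
  have hk' : (0 : ℚ) < k := by exact_mod_cast hk
  have hq : 2 ≤ q := Nat.lt_ceil.mpr <| by
    rw [Nat.cast_one, one_lt_div hk']
    exact_mod_cast hkn
  have hqk : (q - 1) * k < n := by
    have h : ((q - 1 : ℕ) : ℚ) < n / k := Nat.lt_ceil.mp (by omega)
    exact_mod_cast (lt_div_iff₀ hk').mp h
  have hsplit : (q - 1) * k = (q - 2) * k + k := by
    rw [← add_one_mul]; congr 1; omega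
  omega

theorem stmt9 (k n : ℕ) (hk : 0 < k) (hkn : k < n) :
    (((⌈(n : ℚ) / k⌉₊ - 2) + Nat.clog 2 (n - (⌈(n : ℚ) / k⌉₊ - 2) * k) : ℕ) : ℕ∞)
      ≤ Mfix k 1 n := by
  refine le_sInf ?_
  rintro _ ⟨T, hT, hsol, rfl⟩
  have hS : (⌈(n : ℚ) / k⌉₊ - 2) * k + 2 ≤ (Finset.univ : Finset (Fin n)).card := by
    simpa using ceil_div_sub_two_mul_add_two_le hk hkn
  have h := hsol.locates_univ.add_clog_le_depth _ hT hS
  rw [Finset.card_univ, Fintype.card_fin] at h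
  exact_mod_cast h
end

section
/- If n ≥ 2k − 1 and k ≥ 1, then M^[k](1, n) = ⌈n/k⌉ − 2 + ⌈log₂(n − (⌈n/k⌉ − 2)·k)⌉. -/
/-! A test of size `k` splits the `m` remaining candidates into parts of sizes `a ≤ k` and
`m - a`, so the optimal worst-case cost satisfies `F m = 1 + min_{a ≤ k} max (F a) (F (m - a))`.
Since `F` is monotone, the most balanced split `a = min k ⌈m / 2⌉` is optimal, and when
`n ≥ 2k - 1` the test can always be padded up to size `k` with items already known to be pure,
so this recursion is attained by a binary search. Solving it: while `m > 2k` every test discards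
`k` candidates, and once `m ≤ 2k` halving costs `⌈log₂ m⌉`. -/

def splitSize (k m : ℕ) : ℕ := max 1 (min k ((m + 1) / 2))

-- Among `n ≥ 2k - 1` items there are always enough non-candidates to pad a test up to size `k`.
theorem le_splitSize_add_sub {k m n : ℕ} (hn : 2 * k - 1 ≤ n) (hm : m ≤ n) :
    k ≤ splitSize k m + (n - m) := by
  unfold splitSize
  omega

-- The cost `F` of the balanced recursion; the `max 1` in `splitSize` only matters for `k = 0`,
-- where it keeps the recursion well-founded.
def searchCost (k m : ℕ) : ℕ :=
  if m ≤ 1 then 0 else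
    1 + max (searchCost k (splitSize k m)) (searchCost k (m - splitSize k m))
termination_by m
decreasing_by all_goals unfold splitSize; omega

theorem searchCost_of_le_one {k m : ℕ} (h : m ≤ 1) : searchCost k m = 0 := by
  rw [searchCost, if_pos h]

theorem searchCost_of_two_le {k m : ℕ} (h : 2 ≤ m) :
    searchCost k m =
      1 + max (searchCost k (splitSize k m)) (searchCost k (m - splitSize k m)) := by
  rw [searchCost, if_neg (by omega)]

theorem searchCost_mono (k : ℕ) : Monotone (searchCost k) := by
  suffices h : ∀ m a, a ≤ m → searchCost k a ≤ searchCost k m from fun a m => h m a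
  intro m
  induction m using Nat.strong_induction_on with
  | _ m ih =>
    intro a ham
    rcases Nat.lt_or_ge a 2 with ha | ha
    · simp [searchCost_of_le_one (Nat.le_of_lt_succ ha)]
    rw [searchCost_of_two_le ha, searchCost_of_two_le (ha.trans ham)]
    have hsplit := ih (splitSize k m) (by unfold splitSize; omega) (splitSize k a)
      (by unfold splitSize; omega)
    have hrest := ih (m - splitSize k m) (by unfold splitSize; omega) (a - splitSize k a)
      (by unfold splitSize; omega)
    omega

theorem searchCost_add_le {k a b : ℕ} (ha : a ≤ k) :
    searchCost k (a + b) ≤ 1 + max (searchCost k a) (searchCost k b) := by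
  rcases Nat.lt_or_ge (a + b) 2 with h | h
  · simp [searchCost_of_le_one (Nat.le_of_lt_succ h)]
  rw [searchCost_of_two_le h]
  have mono := searchCost_mono k
  have hs : searchCost k (splitSize k (a + b)) ≤ max (searchCost k a) (searchCost k b) := by
    rcases Nat.lt_or_ge a (splitSize k (a + b)) with h' | h'
    · exact le_max_of_le_right (mono (by unfold splitSize at h' ⊢; omega))
    · exact le_max_of_le_left (mono h')
  have hr : searchCost k (a + b - splitSize k (a + b)) ≤
      max (searchCost k a) (searchCost k b) := by
    rcases Nat.lt_or_ge (splitSize k (a + b)) a with h' | h'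
    · exact le_max_of_le_left (mono (by unfold splitSize at h' ⊢; omega))
    · exact le_max_of_le_right (mono (by omega))
  omega

theorem searchCost_eq_clog {k m : ℕ} (hm : m ≤ 2 * k) : searchCost k m = Nat.clog 2 m := by
  induction m using Nat.strong_induction_on with
  | _ m ih =>
    rcases Nat.lt_or_ge m 2 with h | h
    · interval_cases m <;> simp [searchCost_of_le_one]
    have hs : splitSize k m = (m + 1) / 2 := by unfold splitSize; omega
    rw [searchCost_of_two_le h, hs, ih _ (by omega) (by omega), ih _ (by omega) (by omega),
      max_eq_left (Nat.clog_mono_right 2 (by omega)), Nat.clog_of_two_le one_lt_two h,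
      add_comm]
    rfl

theorem searchCost_of_two_mul_lt {k m : ℕ} (hk : 1 ≤ k) (hm : 2 * k < m) :
    searchCost k m = 1 + searchCost k (m - k) := by
  have hs : splitSize k m = k := by unfold splitSize; omega
  rw [searchCost_of_two_le (by omega), hs,
    max_eq_right (searchCost_mono k (by omega : k ≤ m - k))]

theorem ceil_sub_div_add_one {k n : ℕ} (hk : 1 ≤ k) (hkn : k ≤ n) :
    ⌈((n - k : ℕ) : ℚ) / k⌉₊ + 1 = ⌈(n : ℚ) / k⌉₊ := by
  have hk' : (k : ℚ) ≠ 0 := by positivity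
  rw [← Nat.ceil_add_one (by positivity), Nat.cast_sub hkn, sub_div, div_self hk',
    sub_add_cancel]

theorem searchCost_eq_ceil_div_add_clog {k : ℕ} (hk : 1 ≤ k) (n : ℕ) :
    searchCost k n = (⌈(n : ℚ) / k⌉₊ - 2) + Nat.clog 2 (n - (⌈(n : ℚ) / k⌉₊ - 2) * k) := by
  induction n using Nat.strong_induction_on with
  | _ n ih =>
    rcases Nat.lt_or_ge (2 * k) n with h | h
    · have hpeel := ceil_sub_div_add_one hk (by omega : k ≤ n)
      obtain ⟨d, hd⟩ : ∃ d, ⌈((n - k : ℕ) : ℚ) / k⌉₊ = d + 2 := by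
        refine ⟨_, (Nat.sub_add_cancel ?_).symm⟩
        rw [Nat.succ_le_iff, Nat.lt_ceil, lt_div_iff₀ (by positivity)]
        norm_cast
        omega
      rw [searchCost_of_two_mul_lt hk h, ih (n - k) (by omega), ← hpeel, hd,
        show d + 2 + 1 - 2 = d + 1 by omega, add_one_mul, Nat.add_sub_cancel,
        Nat.sub_sub, add_comm k]
      omega
    · have hq : ⌈(n : ℚ) / k⌉₊ - 2 = 0 := by
        rw [Nat.sub_eq_zero_iff_le, Nat.ceil_le, div_le_iff₀ (by positivity)]
        exact_mod_cast h
      rw [searchCost_eq_clog h, hq, zero_mul, Nat.sub_zero, zero_add]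

-- Some subset of `C` with `i` elements (junk value `C` when `i > #C`).
noncomputable def subsetOfCard {α : Type*} (C : Finset α) (i : ℕ) : Finset α :=
  if h : i ≤ C.card then (Finset.exists_subset_card_eq h).choose else C

theorem subsetOfCard_subset {α : Type*} (C : Finset α) (i : ℕ) : subsetOfCard C i ⊆ C := by
  unfold subsetOfCard
  split_ifs with h
  · exact (Finset.exists_subset_card_eq h).choose_spec.1
  · exact subset_rfl

theorem card_subsetOfCard {α : Type*} {C : Finset α} {i : ℕ} (h : i ≤ C.card) :
    (subsetOfCard C i).card = i := by
  rw [subsetOfCard, dif_pos h]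
  exact (Finset.exists_subset_card_eq h).choose_spec.2

theorem card_subsetOfCard_splitSize {α : Type*} (k : ℕ) {C : Finset α} (hC : 1 ≤ C.card) :
    (subsetOfCard C (splitSize k C.card)).card = splitSize k C.card :=
  card_subsetOfCard (by unfold splitSize; omega)

namespace GTTree

variable {n : ℕ}

theorem solves_one_iff (T : GTTree n) :
    T.Solves 1 ↔ ∀ x, T.run {x} = {x} := by
  refine ⟨fun h x => h {x} (Finset.card_singleton x), fun h D hD => ?_⟩
  obtain ⟨x, rfl⟩ := Finset.card_eq_one.mp hD
  exact h x

theorem run_node_singleton (t : Finset (Fin n)) (p q : GTTree n) (x : Fin n) :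
    (node t p q).run {x} = if x ∈ t then p.run {x} else q.run {x} := by
  by_cases hx : x ∈ t <;> simp [run, hx]

theorem searchCost_le_depth {k : ℕ} (T : GTTree n) (hT : T.SizeK k) (C : Finset (Fin n))
    (hC : ∀ x ∈ C, T.run {x} = {x}) : searchCost k C.card ≤ T.depth := by
  induction T generalizing C with
  | leaf g =>
    have hC1 : C.card ≤ 1 := Finset.card_le_one.mpr fun x hx y hy =>
      Finset.singleton_inj.mp ((hC x hx).symm.trans (hC y hy))
    simp [searchCost_of_le_one hC1]
  | node t p q ihp ihq =>
    obtain ⟨htk, hp, hq⟩ := hT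
    have hpos := ihp hp (C ∩ t) fun x hx => by
      obtain ⟨hxC, hxt⟩ := Finset.mem_inter.mp hx
      simpa [run_node_singleton, hxt] using hC x hxC
    have hneg := ihq hq (C \ t) fun x hx => by
      obtain ⟨hxC, hxt⟩ := Finset.mem_sdiff.mp hx
      simpa [run_node_singleton, hxt] using hC x hxC
    have hsplit : (C ∩ t).card ≤ k := htk ▸ Finset.card_le_card Finset.inter_subset_right
    calc searchCost k C.card
        = searchCost k ((C ∩ t).card + (C \ t).card) := by rw [Finset.card_inter_add_card_sdiff]
      _ ≤ 1 + max (searchCost k (C ∩ t).card) (searchCost k (C \ t).card) :=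
          searchCost_add_le hsplit
      _ ≤ (node t p q).depth := by simp only [depth]; omega

noncomputable def binarySearch (k : ℕ) (C : Finset (Fin n)) : GTTree n :=
  if C.card ≤ 1 then leaf C else
    node (subsetOfCard C (splitSize k C.card) ∪ subsetOfCard Cᶜ (k - splitSize k C.card))
      (binarySearch k (subsetOfCard C (splitSize k C.card)))
      (binarySearch k (C \ subsetOfCard C (splitSize k C.card)))
termination_by C.card
decreasing_by
  all_goals
    have hA := card_subsetOfCard_splitSize k (C := C) (by omega)
    unfold splitSize at hA ⊢
  · omega
  · rw [Finset.card_sdiff_of_subset (subsetOfCard_subset _ _)]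
    omega

theorem binarySearch_run (k : ℕ) (C : Finset (Fin n)) :
    ∀ x ∈ C, (binarySearch k C).run {x} = {x} := by
  fun_induction binarySearch k C with
  | case1 C hC =>
    intro x hx
    exact Finset.eq_singleton_iff_unique_mem.mpr
      ⟨hx, fun y hy => Finset.card_le_one.mp hC y hy x hx⟩
  | case2 C hC ihA ihB =>
    intro x hx
    have hxpad : x ∉ subsetOfCard Cᶜ (k - splitSize k C.card) := fun h =>
      Finset.mem_compl.mp (subsetOfCard_subset _ _ h) hx
    rw [run_node_singleton]
    by_cases hxA : x ∈ subsetOfCard C (splitSize k C.card)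
    · rw [if_pos (Finset.mem_union_left _ hxA)]
      exact ihA x hxA
    · rw [if_neg (by simp [hxA, hxpad])]
      exact ihB x (Finset.mem_sdiff.mpr ⟨hx, hxA⟩)

theorem depth_binarySearch (k : ℕ) (C : Finset (Fin n)) :
    (binarySearch k C).depth = searchCost k C.card := by
  fun_induction binarySearch k C with
  | case1 C hC => rw [searchCost_of_le_one hC]; rfl
  | case2 C hC ihA ihB =>
    rw [depth, ihA, ihB, Finset.card_sdiff_of_subset (subsetOfCard_subset _ _),
      card_subsetOfCard_splitSize k (C := C) (by omega),
      searchCost_of_two_le (m := C.card) (by omega), add_comm]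

theorem sizeK_binarySearch {k : ℕ} (hk : 1 ≤ k) (hn : 2 * k - 1 ≤ n) (C : Finset (Fin n)) :
    (binarySearch k C).SizeK k := by
  fun_induction binarySearch k C with
  | case1 => trivial
  | case2 C hC ihA ihB =>
    refine ⟨?_, ihA, ihB⟩
    have hA := card_subsetOfCard_splitSize k (C := C) (by omega)
    have hCn : C.card ≤ n := by simpa using C.card_le_univ
    have hpad : (subsetOfCard Cᶜ (k - splitSize k C.card)).card = k - splitSize k C.card := by
      refine card_subsetOfCard ?_
      have := le_splitSize_add_sub hn hCn
      rw [Finset.card_compl, Fintype.card_fin]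
      omega
    have hsk : splitSize k C.card ≤ k := by unfold splitSize; omega
    rw [Finset.card_union_of_disjoint (disjoint_compl_right.mono (subsetOfCard_subset _ _)
      (subsetOfCard_subset _ _)), hA, hpad]
    omega

end GTTree

theorem Mfix_one_eq_searchCost {k n : ℕ} (hk : 1 ≤ k) (hn : 2 * k - 1 ≤ n) :
    Mfix k 1 n = searchCost k n := by
  have hcard : (Finset.univ : Finset (Fin n)).card = n := Finset.card_fin n
  refine IsLeast.csInf_eq ⟨⟨GTTree.binarySearch k Finset.univ, GTTree.sizeK_binarySearch hk hn _,
    (GTTree.solves_one_iff _).mpr fun x => GTTree.binarySearch_run k _ x (Finset.mem_univ x),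
    by rw [GTTree.depth_binarySearch, hcard]⟩, ?_⟩
  rintro c ⟨T, hTk, hTs, rfl⟩
  have hlower := T.searchCost_le_depth hTk Finset.univ fun x _ => (T.solves_one_iff.mp hTs) x
  rw [hcard] at hlower
  exact_mod_cast hlower

theorem stmt11 (k n : ℕ) (hk : 1 ≤ k) (hn : 2 * k - 1 ≤ n) :
    Mfix k 1 n
      = (((⌈(n : ℚ) / k⌉₊ - 2) + Nat.clog 2 (n - (⌈(n : ℚ) / k⌉₊ - 2) * k) : ℕ) : ℕ∞) := by
  rw [Mfix_one_eq_searchCost hk hn, searchCost_eq_ceil_div_add_clog hk]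
end

section
/- M^[2](2, 4) = 5: with exactly 2 defectives among 4 items and tests of size exactly 2, the optimal worst-case number of tests is C(4,2) − 1 = 5. -/
/-!
A test of size `n - d` is pure for exactly one `d`-set, its complement. Following the positive
outcomes, each test therefore discards at most one candidate, so a strategy of depth `h` sends
two of the `C(n, d)` candidates to the same leaf unless `C(n, d) ≤ h + 1`. Conversely, testing
the complements of all candidates but one, in turn, identifies the defective set with
`C(n, d) - 1` tests.
-/

theorem Finset.inter_nonempty_iff_ne_compl {α : Type*} [Fintype α] [DecidableEq α]
    {t s : Finset α} (h : t.card + s.card = Fintype.card α) :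
    (t ∩ s).Nonempty ↔ s ≠ tᶜ := by
  rw [← not_iff_not, Finset.not_nonempty_iff_eq_empty, ← Finset.disjoint_iff_inter_eq_empty,
    ← Finset.subset_compl_iff_disjoint_left, not_not]
  refine ⟨fun hsub => Finset.eq_of_subset_of_card_le hsub ?_, fun hs => hs.le⟩
  rw [Finset.card_compl]
  omega

namespace GTTree

variable {n k d : ℕ}

theorem exists_ne_run_eq_of_depth_add_two_le (hn : k + d = n) (T : GTTree n) (hT : T.SizeK k)
    (S : Finset (Finset (Fin n))) (hS : ∀ D ∈ S, D.card = d) (hdepth : T.depth + 2 ≤ S.card) :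
    ∃ D₁ ∈ S, ∃ D₂ ∈ S, D₁ ≠ D₂ ∧ T.run D₁ = T.run D₂ := by
  induction T generalizing S with
  | leaf g =>
    have hS : 1 < S.card := by simp only [depth] at hdepth; omega
    obtain ⟨D₁, h₁, D₂, h₂, hne⟩ := Finset.one_lt_card.mp hS
    exact ⟨D₁, h₁, D₂, h₂, hne, rfl⟩
  | node t p q ihp _ =>
    obtain ⟨ht, hp, -⟩ := hT
    have hsub : S.erase tᶜ ⊆ S := Finset.erase_subset _ _
    have hpos : ∀ D ∈ S.erase tᶜ, (t ∩ D).Nonempty := fun D hD =>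
      (Finset.inter_nonempty_iff_ne_compl (by rw [ht, hS D (hsub hD), Fintype.card_fin, hn])).2
        (Finset.ne_of_mem_erase hD)
    have hcard : p.depth + 2 ≤ (S.erase tᶜ).card := by
      have := Finset.pred_card_le_card_erase (s := S) (a := tᶜ)
      simp only [depth] at hdepth
      omega
    obtain ⟨D₁, h₁, D₂, h₂, hne, hrun⟩ :=
      ihp hp (S.erase tᶜ) (fun D hD => hS D (hsub hD)) hcard
    refine ⟨D₁, hsub h₁, D₂, hsub h₂, hne, ?_⟩
    simpa only [run, if_pos (hpos D₁ h₁), if_pos (hpos D₂ h₂)] using hrun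

theorem choose_le_depth_add_one (hn : k + d = n) {T : GTTree n} (hT : T.SizeK k)
    (hsolves : T.Solves d) : n.choose d ≤ T.depth + 1 := by
  by_contra! hlt
  have hcard : (Finset.univ.powersetCard d : Finset (Finset (Fin n))).card = n.choose d := by
    rw [Finset.card_powersetCard, Finset.card_univ, Fintype.card_fin]
  obtain ⟨D₁, h₁, D₂, h₂, hne, hrun⟩ := exists_ne_run_eq_of_depth_add_two_le hn T hT
    (Finset.univ.powersetCard d) (fun D hD => (Finset.mem_powersetCard.mp hD).2) (by omega)
  rw [hsolves D₁ (Finset.mem_powersetCard.mp h₁).2,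
    hsolves D₂ (Finset.mem_powersetCard.mp h₂).2] at hrun
  exact hne hrun

def complementChain : List (Finset (Fin n)) → GTTree n
  | [] => .leaf ∅
  | [D] => .leaf D
  | D₁ :: D₂ :: L => .node D₁ᶜ (complementChain (D₂ :: L)) (.leaf D₁)

theorem depth_complementChain (L : List (Finset (Fin n))) :
    (complementChain L).depth = L.length - 1 := by
  induction L using GTTree.complementChain.induct with
  | case1 | case2 => rfl
  | case3 D₁ D₂ L ih => simp [complementChain, depth, ih]

theorem sizeK_complementChain (hn : k + d = n) (L : List (Finset (Fin n)))
    (hL : ∀ D ∈ L, D.card = d) : (complementChain L).SizeK k := by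
  induction L using GTTree.complementChain.induct with
  | case1 | case2 => trivial
  | case3 D₁ D₂ L ih =>
    refine ⟨?_, ih fun D hD => hL D (List.mem_cons_of_mem _ hD), trivial⟩
    rw [Finset.card_compl, Fintype.card_fin, hL D₁ List.mem_cons_self]
    omega

theorem run_complementChain (hn : k + d = n) (L : List (Finset (Fin n)))
    (hL : ∀ D ∈ L, D.card = d) {D : Finset (Fin n)} (hD : D ∈ L) :
    (complementChain L).run D = D := by
  induction L using GTTree.complementChain.induct with
  | case1 => simp at hD
  | case2 => simpa [complementChain, run] using (List.mem_singleton.mp hD).symm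
  | case3 D₁ D₂ L ih =>
    have hcard : D₁ᶜ.card + D.card = Fintype.card (Fin n) := by
      rw [Finset.card_compl, Fintype.card_fin, hL D₁ List.mem_cons_self, hL D hD]
      omega
    simp only [complementChain, run, Finset.inter_nonempty_iff_ne_compl hcard, compl_compl]
    split_ifs with hne
    · exact ih (fun D hD => hL D (List.mem_cons_of_mem _ hD))
        ((List.mem_cons.mp hD).resolve_left hne)
    · exact (not_not.mp hne).symm

end GTTree

open GTTree in
theorem Mfix_eq_choose_sub_one {n k d : ℕ} (hn : k + d = n) :
    Mfix k d n = n.choose d - 1 := by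
  apply le_antisymm
  · let L := (Finset.univ.powersetCard d : Finset (Finset (Fin n))).toList
    have hL : ∀ D ∈ L, D.card = d := fun D hD =>
      (Finset.mem_powersetCard.mp (Finset.mem_toList.mp hD)).2
    refine sInf_le ⟨complementChain L, sizeK_complementChain hn L hL, fun D hD => ?_, ?_⟩
    · exact run_complementChain hn L hL (by simp [L, hD])
    · simp [L, depth_complementChain, Finset.card_powersetCard]
  · refine le_sInf ?_
    rintro c ⟨T, hT, hsolves, rfl⟩
    have := choose_le_depth_add_one hn hT hsolves
    exact_mod_cast (by omega : n.choose d - 1 ≤ T.depth)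

theorem stmt15 : Mfix 2 2 4 = 5 := by
  rw [Mfix_eq_choose_sub_one (by norm_num : 2 + 2 = 4)]
  rfl
end

section
/- M^[2](2, n) = ⌊n/2⌋ + 2 for every n ≥ 5. -/
/-!
Lower bound: a strategy of depth `d` tells apart at most `2 ^ d` defective sets. Confine the
defectives to a set `U` of at least five items. A pure answer to a test leaves them confined to
`U` minus at most two items, so every two items of `U` cost one test. This bottoms out at five
items, whose `10 > 2 ^ 3` pairs need four tests, and at six items, which need five: every test
leaves at least `9 > 2 ^ 3` of their `15` pairs on one of its two sides.

Upper bound: test the disjoint blocks `{2j, 2j+1}`, `j < n / 2`, in turn. At most two of them are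
contaminated; once these are known, an item `z` of a clean block is pure, so the test `{u, z}`
decides whether `u` is defective, and two such tests finish: probe one item of each contaminated
block or, if only block `j` is contaminated, both of its items (the second defective is then the
other item of the block or the untested last item `n - 1`).
-/

open Finset

theorem filter_not_inter_nonempty_powersetCard {α : Type*} [DecidableEq α]
    (t U : Finset α) (k : ℕ) :
    {D ∈ U.powersetCard k | ¬(t ∩ D).Nonempty} = (U \ t).powersetCard k := by
  ext D
  simp only [mem_filter, mem_powersetCard, subset_sdiff, not_nonempty_iff_eq_empty,
    ← disjoint_iff_inter_eq_empty, disjoint_comm (a := t)]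
  tauto

namespace GTTree

variable {n : ℕ}

def SolvesOn (T : GTTree n) (C : Finset (Finset (Fin n))) : Prop :=
  ∀ D ∈ C, T.run D = D

theorem Solves.solvesOn {T : GTTree n} {d : ℕ} (h : T.Solves d) (U : Finset (Fin n)) :
    T.SolvesOn (U.powersetCard d) :=
  fun D hD => h D (mem_powersetCard.mp hD).2

theorem card_image_run_le (T : GTTree n) (C : Finset (Finset (Fin n))) :
    #(C.image T.run) ≤ 2 ^ T.depth := by
  induction T generalizing C with
  | leaf g =>
    calc #(C.image (leaf g).run) ≤ #({g} : Finset _) :=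
          card_le_card (image_subset_iff.mpr fun _ _ => mem_singleton_self g)
      _ ≤ 2 ^ 0 := by simp
  | node t p q ihp ihq =>
    have hsplit : C.image (node t p q).run ⊆
        {D ∈ C | (t ∩ D).Nonempty}.image p.run ∪ {D ∈ C | ¬(t ∩ D).Nonempty}.image q.run := by
      refine image_subset_iff.mpr fun D hD => ?_
      by_cases h : (t ∩ D).Nonempty
      · exact mem_union_left _ (mem_image.mpr ⟨D, mem_filter.mpr ⟨hD, h⟩, by simp [run, h]⟩)
      · exact mem_union_right _ (mem_image.mpr ⟨D, mem_filter.mpr ⟨hD, h⟩, by simp [run, h]⟩)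
    calc #(C.image (node t p q).run)
        ≤ 2 ^ p.depth + 2 ^ q.depth :=
          (card_le_card hsplit).trans ((card_union_le _ _).trans (add_le_add (ihp _) (ihq _)))
      _ ≤ 2 ^ (node t p q).depth := by
        rw [depth, pow_succ, mul_two]
        gcongr <;> first | exact Nat.one_le_two_pow | omega

theorem SolvesOn.card_le {T : GTTree n} {C : Finset (Finset (Fin n))} (h : T.SolvesOn C) :
    #C ≤ 2 ^ T.depth := by
  simpa [image_congr h] using T.card_image_run_le C

theorem SolvesOn.lt_depth {T : GTTree n} {C : Finset (Finset (Fin n))} (h : T.SolvesOn C)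
    {k : ℕ} (hk : 2 ^ k < #C) : k < T.depth :=
  (Nat.pow_lt_pow_iff_right one_lt_two).mp (hk.trans_le h.card_le)

theorem SolvesOn.pos {t : Finset (Fin n)} {p q : GTTree n} {C : Finset (Finset (Fin n))}
    (h : (node t p q).SolvesOn C) : p.SolvesOn {D ∈ C | (t ∩ D).Nonempty} := by
  intro D hD
  rw [mem_filter] at hD
  simpa [run, hD.2] using h D hD.1

theorem SolvesOn.neg {t : Finset (Fin n)} {p q : GTTree n} {C : Finset (Finset (Fin n))}
    (h : (node t p q).SolvesOn C) : q.SolvesOn {D ∈ C | ¬(t ∩ D).Nonempty} := by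
  intro D hD
  rw [mem_filter] at hD
  simpa [run, hD.2] using h D hD.1

theorem SolvesOn.three_lt_depth {T : GTTree n} {U : Finset (Fin n)}
    (h : T.SolvesOn (U.powersetCard 2)) (hU : 5 ≤ #U) : 3 < T.depth :=
  h.lt_depth <| by
    rw [card_powersetCard]
    have : 10 ≤ (#U).choose 2 := (Nat.choose_le_choose 2 hU).trans' (by decide)
    omega

theorem SolvesOn.card_div_two_add_two_le_depth {T : GTTree n} {U : Finset (Fin n)}
    (h : T.SolvesOn (U.powersetCard 2)) (hT : T.SizeK 2) (hU : 5 ≤ #U) :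
    #U / 2 + 2 ≤ T.depth := by
  induction T generalizing U with
  | leaf => exact absurd (h.three_lt_depth hU) (by simp [depth])
  | node t p q _ ihq =>
    obtain ⟨ht, -, hq⟩ := hT
    have hneg := h.neg
    rw [filter_not_inter_nonempty_powersetCard] at hneg
    have hsdiff : #U - 2 ≤ #(U \ t) := ht ▸ le_card_sdiff t U
    simp only [depth]
    by_cases hrest : 5 ≤ #(U \ t)
    · have := ihq hneg hq hrest
      omega
    obtain h5 | h6 : #U = 5 ∨ #U = 6 := by omega
    · have := h.three_lt_depth hU
      simp only [depth] at this
      omega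
    have hpos : #{D ∈ U.powersetCard 2 | (t ∩ D).Nonempty} = 9 := by
      have := card_filter_add_card_filter_not (s := U.powersetCard 2) fun D => (t ∩ D).Nonempty
      rw [filter_not_inter_nonempty_powersetCard, card_powersetCard, card_powersetCard,
        h6, (by omega : #(U \ t) = 4)] at this
      norm_num [Nat.choose] at this
      omega
    have := h.pos.lt_depth (k := 3) (by omega)
    omega

/-- Items are addressed by their indices in `ℕ`, so that the bookkeeping of the strategy below
becomes linear arithmetic. -/
def pairOf (n p q : ℕ) : Finset (Fin n) := {a | a.val = p ∨ a.val = q}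

theorem mem_pairOf {p q : ℕ} {a : Fin n} : a ∈ pairOf n p q ↔ a.val = p ∨ a.val = q := by
  simp [pairOf]

theorem card_pairOf {p q : ℕ} (hpq : p ≠ q) (hp : p < n) (hq : q < n) :
    #(pairOf n p q) = 2 := by
  have : pairOf n p q = {⟨p, hp⟩, ⟨q, hq⟩} := by
    ext a
    simp [mem_pairOf, Fin.ext_iff]
  rw [this, card_pair (by simpa [Fin.ext_iff])]

theorem pair_eq_pairOf (a b : Fin n) : ({a, b} : Finset (Fin n)) = pairOf n a b := by
  ext c
  simp [mem_pairOf, Fin.ext_iff]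

theorem pairOf_congr {p q x y : ℕ} (h : p = x ∧ q = y ∨ p = y ∧ q = x) :
    pairOf n p q = pairOf n x y := by
  ext a
  simp only [mem_pairOf]
  omega

theorem run_node_pairOf {p q x y : ℕ} (hx : x < n) (hy : y < n) (P Q : GTTree n) :
    (node (pairOf n p q) P Q).run (pairOf n x y) =
      if x = p ∨ x = q ∨ y = p ∨ y = q then P.run (pairOf n x y) else Q.run (pairOf n x y) := by
  have hmeet : (pairOf n p q ∩ pairOf n x y).Nonempty ↔ x = p ∨ x = q ∨ y = p ∨ y = q := by
    constructor
    · rintro ⟨a, ha⟩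
      simp only [mem_inter, mem_pairOf] at ha
      omega
    · intro h
      by_cases hxpq : x = p ∨ x = q
      · exact ⟨⟨x, hx⟩, by simp [mem_pairOf, hxpq]⟩
      · exact ⟨⟨y, hy⟩, mem_inter.mpr
          ⟨mem_pairOf.mpr (show y = p ∨ y = q by omega), mem_pairOf.mpr (.inr rfl)⟩⟩
  simp only [run, hmeet]

def probeTwo (z u v : ℕ) (answer : Bool → Bool → Finset (Fin n)) : GTTree n :=
  node (pairOf n u z)
    (node (pairOf n v z) (leaf (answer true true)) (leaf (answer true false)))
    (node (pairOf n v z) (leaf (answer false true)) (leaf (answer false false)))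

theorem run_probeTwo {z u v x y : ℕ} (answer : Bool → Bool → Finset (Fin n))
    (hx : x < n) (hy : y < n) (hzx : z ≠ x) (hzy : z ≠ y) :
    (probeTwo z u v answer).run (pairOf n x y) =
      answer (decide (x = u ∨ y = u)) (decide (x = v ∨ y = v)) := by
  simp only [probeTwo, run_node_pairOf hx hy]
  by_cases hu : x = u ∨ y = u <;> by_cases hv : x = v ∨ y = v <;>
    simp [run, hu, hv, hzx.symm, hzy.symm]

theorem depth_probeTwo (z u v : ℕ) (answer : Bool → Bool → Finset (Fin n)) :
    (probeTwo z u v answer).depth = 2 := rfl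

theorem sizeK_probeTwo {z u v : ℕ} (answer : Bool → Bool → Finset (Fin n))
    (hz : z < n) (hu : u < n) (hv : v < n) (huz : u ≠ z) (hvz : v ≠ z) :
    (probeTwo z u v answer).SizeK 2 :=
  ⟨card_pairOf huz hu hz, ⟨card_pairOf hvz hv hz, trivial, trivial⟩,
    ⟨card_pairOf hvz hv hz, trivial, trivial⟩⟩

def spareBlock (i j : ℕ) : ℕ :=
  if i ≠ 0 ∧ j ≠ 0 then 0 else if i ≠ 1 ∧ j ≠ 1 then 1 else 2

theorem spareBlock_spec (i j : ℕ) :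
    spareBlock i j ≠ i ∧ spareBlock i j ≠ j ∧ spareBlock i j ≤ 2 := by
  unfold spareBlock
  split_ifs <;> omega

theorem spareBlock_self_le_one (i : ℕ) : spareBlock i i ≤ 1 := by
  unfold spareBlock
  split_ifs <;> omega

/-- Only block `i` is contaminated. The pure item `2 * spareBlock i i` is not the last item
`n - 1`, which may be defective here. -/
def resolveOne (n i : ℕ) : GTTree n :=
  probeTwo (2 * spareBlock i i) (2 * i) (2 * i + 1) fun bu bv =>
    if bu && bv then pairOf n (2 * i) (2 * i + 1)
    else pairOf n (if bu then 2 * i else 2 * i + 1) (n - 1)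

def resolveTwo (n i j : ℕ) : GTTree n :=
  probeTwo (2 * spareBlock i j) (2 * i) (2 * j) fun bu bv =>
    pairOf n (if bu then 2 * i else 2 * i + 1) (if bv then 2 * j else 2 * j + 1)

theorem sizeK_resolveOne {i : ℕ} (hn : 5 ≤ n) (hi : i < n / 2) : (resolveOne n i).SizeK 2 := by
  have := spareBlock_spec i i
  apply sizeK_probeTwo <;> omega

theorem sizeK_resolveTwo {i j : ℕ} (hn : 5 ≤ n) (hi : i < n / 2) (hj : j < n / 2) :
    (resolveTwo n i j).SizeK 2 := by
  have := spareBlock_spec i j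
  apply sizeK_probeTwo <;> omega

theorem run_resolveOne {i x y : ℕ} (hn : 5 ≤ n) (hx : x < n) (hy : y < n) (hxy : x ≠ y)
    (hxi : x / 2 = i ∨ x = n - 1) (hyi : y / 2 = i ∨ y = n - 1) (hi : x / 2 = i ∨ y / 2 = i) :
    (resolveOne n i).run (pairOf n x y) = pairOf n x y := by
  have := spareBlock_spec i i
  have := spareBlock_self_le_one i
  rw [resolveOne, run_probeTwo _ hx hy (by omega) (by omega)]
  simp only [decide_eq_true_eq, Bool.and_eq_true]
  split_ifs <;> apply pairOf_congr <;> omega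

theorem run_resolveTwo {i j x y : ℕ} (hx : x < n) (hy : y < n) (hij : i ≠ j)
    (hi : x / 2 = i ∨ y / 2 = i) (hj : x / 2 = j ∨ y / 2 = j) :
    (resolveTwo n i j).run (pairOf n x y) = pairOf n x y := by
  have := spareBlock_spec i j
  rw [resolveTwo, run_probeTwo _ hx hy (by omega) (by omega)]
  simp only [decide_eq_true_eq]
  split_ifs <;> apply pairOf_congr <;> omega

/-- Tests the blocks `{2k, 2k+1}` for `j ≤ k < j + m`; `s` is the contaminated block found
among the earlier ones, if any. -/
def sweep (n : ℕ) : ℕ → ℕ → Option ℕ → GTTree n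
  | _, 0, none => leaf ∅
  | _, 0, some i => resolveOne n i
  | j, m + 1, none =>
    node (pairOf n (2 * j) (2 * j + 1)) (sweep n (j + 1) m (some j)) (sweep n (j + 1) m none)
  | j, m + 1, some i =>
    node (pairOf n (2 * j) (2 * j + 1)) (resolveTwo n i j) (sweep n (j + 1) m (some i))

theorem depth_sweep_le (j m : ℕ) (s : Option ℕ) : (sweep n j m s).depth ≤ m + 2 := by
  induction m generalizing j s with
  | zero => cases s <;> simp [sweep, depth, resolveOne, depth_probeTwo]
  | succ m ih =>
    have := ih (j + 1) none
    have := ih (j + 1) (some j)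
    have := ih (j + 1) s
    cases s <;> simp only [sweep, depth, resolveTwo, depth_probeTwo] <;> omega

theorem sizeK_sweep (hn : 5 ≤ n) {j m : ℕ} (hjm : j + m ≤ n / 2) {s : Option ℕ}
    (hs : ∀ i ∈ s, i < n / 2) : (sweep n j m s).SizeK 2 := by
  induction m generalizing j s with
  | zero =>
    cases s with
    | none => trivial
    | some i => exact sizeK_resolveOne hn (hs i rfl)
  | succ m ih =>
    have hblock : #(pairOf n (2 * j) (2 * j + 1)) = 2 :=
      card_pairOf (by omega) (by omega) (by omega)
    cases s with
    | none => exact ⟨hblock, ih (by omega) (by simpa using (by omega : j < n / 2)), ih (by omega) (by simp)⟩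
    | some i => exact ⟨hblock, sizeK_resolveTwo hn (hs i rfl) (by omega), ih (by omega) hs⟩

section Correctness

variable {x y : ℕ} (hx : x < n) (hy : y < n)
include hx hy

theorem run_sweep_some (hn : 5 ≤ n) (hxy : x ≠ y) {i j m : ℕ} (hjm : j + m = n / 2)
    (hij : i < j) (hi : x / 2 = i ∨ y / 2 = i)
    (hfirst : ∀ k < j, x / 2 = k ∨ y / 2 = k → k = i) :
    (sweep n j m (some i)).run (pairOf n x y) = pairOf n x y := by
  induction m generalizing j with
  | zero =>
    have := hfirst (x / 2)
    have := hfirst (y / 2)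
    exact run_resolveOne hn hx hy hxy (by omega) (by omega) hi
  | succ m ih =>
    rw [sweep, run_node_pairOf hx hy]
    split_ifs with hj
    · exact run_resolveTwo hx hy (by omega) hi (by omega)
    · exact ih (by omega) (by omega) fun k hk hk' => hfirst k (by omega) hk'

theorem run_sweep_none (hn : 5 ≤ n) (hxy : x ≠ y) {j m : ℕ} (hjm : j + m = n / 2)
    (hnone : ∀ k < j, x / 2 ≠ k ∧ y / 2 ≠ k) :
    (sweep n j m none).run (pairOf n x y) = pairOf n x y := by
  induction m generalizing j with
  | zero =>
    have := hnone (x / 2)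
    have := hnone (y / 2)
    omega
  | succ m ih =>
    rw [sweep, run_node_pairOf hx hy]
    split_ifs with hj
    · exact run_sweep_some hx hy hn hxy (by omega) (Nat.lt_succ_self j) (by omega)
        fun k hk hk' => by have := hnone k; omega
    · exact ih (by omega) fun k hk => by have := hnone k; omega

end Correctness

theorem solves_sweep (hn : 5 ≤ n) : (sweep n 0 (n / 2) none).Solves 2 := by
  intro D hD
  obtain ⟨a, b, hab, rfl⟩ := card_eq_two.mp hD
  rw [pair_eq_pairOf]
  exact run_sweep_none a.isLt b.isLt hn (Fin.val_ne_of_ne hab) (zero_add _) (by simp)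

end GTTree

theorem stmt16 (n : ℕ) (hn : 5 ≤ n) : Mfix 2 2 n = ((n / 2 + 2 : ℕ) : ℕ∞) := by
  apply le_antisymm
  · refine sInf_le_of_le ⟨GTTree.sweep n 0 (n / 2) none,
      GTTree.sizeK_sweep hn (zero_add _).le (by simp), GTTree.solves_sweep hn, rfl⟩ ?_
    exact_mod_cast GTTree.depth_sweep_le 0 (n / 2) none
  · refine le_sInf ?_
    rintro _ ⟨T, hT, hsolves, rfl⟩
    have := (hsolves.solvesOn univ).card_div_two_add_two_le_depth hT (by simpa using hn)
    rw [card_univ, Fintype.card_fin] at this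
    exact_mod_cast this
end

section
/- M^[2](2, n) ≥ ⌊n/2⌋ + 2 for every n ≥ 8: any adaptive strategy using tests of size exactly 2 needs, in the worst case, at least ⌊n/2⌋ + 2 tests to identify 2 defectives among n items. -/
/-- Counting lemma: a tree that correctly identifies every member of a family
`𝒟` of candidate defective sets must have at least `|𝒟|` leaves. -/
lemma GTTree.card_le_pow_depth {n : ℕ} (T : GTTree n) :
    ∀ 𝒟 : Finset (Finset (Fin n)), (∀ D ∈ 𝒟, T.run D = D) → 𝒟.card ≤ 2 ^ T.depth := by
  induction T with
  | leaf g =>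
    intro 𝒟 h
    have : 𝒟.card ≤ 1 := Finset.card_le_one.mpr (by
      intro a ha b hb
      have h1 := h a ha; have h2 := h b hb
      simp [GTTree.run] at h1 h2
      rw [← h1, ← h2])
    simpa [GTTree.depth] using this
  | node t p q ihp ihq =>
    intro 𝒟 h
    classical
    have hsplit := Finset.card_filter_add_card_filter_not
      (s := 𝒟) (p := fun D => (t ∩ D).Nonempty)
    have hP : (𝒟.filter (fun D => (t ∩ D).Nonempty)).card ≤ 2 ^ p.depth := by
      apply ihp
      intro D hD
      simp only [Finset.mem_filter] at hD
      have := h D hD.1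
      simpa [GTTree.run, hD.2] using this
    have hQ : (𝒟.filter (fun D => ¬ (t ∩ D).Nonempty)).card ≤ 2 ^ q.depth := by
      apply ihq
      intro D hD
      simp only [Finset.mem_filter] at hD
      have := h D hD.1
      simpa [GTTree.run, hD.2] using this
    have h1 : 2 ^ p.depth ≤ 2 ^ max p.depth q.depth :=
      Nat.pow_le_pow_right (by norm_num) (le_max_left _ _)
    have h2 : 2 ^ q.depth ≤ 2 ^ max p.depth q.depth :=
      Nat.pow_le_pow_right (by norm_num) (le_max_right _ _)
    have : (2 : ℕ) ^ (max p.depth q.depth + 1) = 2 ^ max p.depth q.depth * 2 := pow_succ 2 _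
    simp only [GTTree.depth]
    omega

lemma pow_aux {d c : ℕ} (h1 : 9 ≤ c) (h2 : c ≤ 2 ^ d) : 4 ≤ d := by
  by_contra hc
  push_neg at hc
  have : 2 ^ d ≤ 2 ^ 3 := Nat.pow_le_pow_right (by norm_num) (by omega)
  norm_num at this
  omega

/-- Main lower bound: a size-2-test tree that correctly identifies every pair
inside a free set `S` with `|S| ≥ 5` has depth at least `|S|/2 + 2`. -/
lemma GTTree.main_lb {n : ℕ} (T : GTTree n) :
    T.SizeK 2 → ∀ S : Finset (Fin n),
      (∀ D ⊆ S, D.card = 2 → T.run D = D) → 5 ≤ S.card → S.card / 2 + 2 ≤ T.depth := by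
  induction T with
  | leaf g =>
    intro _ S h hS
    exfalso
    obtain ⟨u, hu, hcard⟩ := Finset.exists_subset_card_eq (show 3 ≤ S.card by omega)
    obtain ⟨a, b, c, hab, hac, hbc, rfl⟩ := Finset.card_eq_three.mp hcard
    have ha : a ∈ S := hu (by simp)
    have hb : b ∈ S := hu (by simp)
    have hc : c ∈ S := hu (by simp)
    have h1 : GTTree.run {a, b} (GTTree.leaf g) = {a, b} :=
      h {a, b} (by intro x hx; simp at hx; rcases hx with rfl | rfl <;> assumption)
        (by rw [Finset.card_insert_of_notMem (by simp [hab])]; simp)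
    have h2 : GTTree.run {a, c} (GTTree.leaf g) = {a, c} :=
      h {a, c} (by intro x hx; simp at hx; rcases hx with rfl | rfl <;> assumption)
        (by rw [Finset.card_insert_of_notMem (by simp [hac])]; simp)
    simp only [GTTree.run] at h1 h2
    have he : ({a, b} : Finset (Fin n)) = {a, c} := h1.symm.trans h2
    have : b ∈ ({a, c} : Finset (Fin n)) := by rw [← he]; simp
    simp at this
    tauto
  | node t p q ihp ihq =>
    intro hsz S h hS
    classical
    obtain ⟨ht, hp, hq⟩ := hsz
    -- facts about pairs inside a set going to the negative branch
    have hqrun : ∀ D ⊆ S \ t, D.card = 2 → q.run D = D := by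
      intro D hD hD2
      have hDt : ¬ (t ∩ D).Nonempty := by
        rw [Finset.not_nonempty_iff_eq_empty, Finset.eq_empty_iff_forall_notMem]
        intro x hx
        simp only [Finset.mem_inter] at hx
        have := hD hx.2
        simp [Finset.mem_sdiff] at this
        exact this.2 hx.1
      have := h D (hD.trans (Finset.sdiff_subset)) hD2
      simpa [GTTree.run, hDt] using this
    have hcardS : S.card ≤ (S \ t).card + 2 := by
      have := Finset.card_le_card_sdiff_add_card (s := S) (t := t)
      omega
    by_cases h7 : 7 ≤ S.card
    · -- inductive step: follow the negative branch
      have h5 : 5 ≤ (S \ t).card := by omega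
      have := ihq hq (S \ t) hqrun h5
      simp only [GTTree.depth]
      omega
    · -- base cases |S| = 5 or 6
      have hS6 : S.card = 5 ∨ S.card = 6 := by omega
      rcases hS6 with h5 | h6
      · -- |S| = 5 : 10 pairs, counting on the whole tree
        have hcount := (GTTree.node t p q).card_le_pow_depth (S.powersetCard 2) (by
          intro D hD
          rw [Finset.mem_powersetCard] at hD
          exact h D hD.1 hD.2)
        rw [Finset.card_powersetCard, h5] at hcount
        have h10 : (10 : ℕ) ≤ Nat.choose 5 2 := by decide
        have h4 : 4 ≤ (GTTree.node t p q).depth := pow_aux (by norm_num) (le_trans h10 hcount)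
        omega
      by_cases hst : 5 ≤ (S \ t).card
      · -- at least 10 pairs all go to the negative branch
        have hcount := q.card_le_pow_depth ((S \ t).powersetCard 2) (by
          intro D hD
          rw [Finset.mem_powersetCard] at hD
          exact hqrun D hD.1 hD.2)
        rw [Finset.card_powersetCard] at hcount
        have h10 : 10 ≤ (S \ t).card.choose 2 := by
          calc (10 : ℕ) = Nat.choose 5 2 := by decide
          _ ≤ (S \ t).card.choose 2 := Nat.choose_le_choose 2 hst
        have : 4 ≤ q.depth := pow_aux (show (9:ℕ) ≤ 10 by norm_num) (le_trans h10 hcount)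
        simp only [GTTree.depth]
        omega
      · -- t ⊆ S (up to size); at least 9 pairs hit t, all go to the positive branch
        have hts : (S \ t).card = S.card - 2 := by omega
        have hprun : ∀ D ∈ S.powersetCard 2 \ (S \ t).powersetCard 2, p.run D = D := by
          intro D hD
          simp only [Finset.mem_sdiff, Finset.mem_powersetCard] at hD
          obtain ⟨⟨hDS, hD2⟩, hD'⟩ := hD
          have hDt : (t ∩ D).Nonempty := by
            by_contra hne
            apply hD'
            constructor
            · intro x hx
              simp only [Finset.mem_sdiff]
              refine ⟨hDS hx, fun hxt => ?_⟩
              exact hne ⟨x, Finset.mem_inter.mpr ⟨hxt, hx⟩⟩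
            · exact hD2
          have := h D hDS hD2
          simpa [GTTree.run, hDt] using this
        have hcount := p.card_le_pow_depth _ hprun
        have hsub : (S \ t).powersetCard 2 ⊆ S.powersetCard 2 :=
          Finset.powersetCard_mono Finset.sdiff_subset
        rw [Finset.card_sdiff_of_subset hsub, Finset.card_powersetCard, Finset.card_powersetCard,
          hts] at hcount
        have h9 : 9 ≤ S.card.choose 2 - (S.card - 2).choose 2 := by
          rw [h6]; decide
        have : 4 ≤ p.depth := pow_aux (show (9:ℕ) ≤ 9 by norm_num) (le_trans h9 hcount)
        simp only [GTTree.depth]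
        omega

theorem stmt17 (n : ℕ) (hn : 8 ≤ n) : ((n / 2 + 2 : ℕ) : ℕ∞) ≤ Mfix 2 2 n := by
  apply le_sInf
  rintro c ⟨T, hsz, hsolves, rfl⟩
  have hcard : (Finset.univ : Finset (Fin n)).card = n := by simp
  have := T.main_lb hsz Finset.univ (fun D _ hD2 => hsolves D hD2)
    (by rw [hcard]; omega)
  rw [hcard] at this
  exact_mod_cast this
end

section
/- M^[2](d, n) ≤ ⌈n/2⌉ + 2d − 3 whenever 3 ≤ d ≤ ⌊n/2⌋ − 1: there is an adaptive strategy using tests of size exactly 2 that identifies the d defectives among n items in at most ⌈n/2⌉ + 2d − 3 tests in the worst case. -/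
/-!
Test the `⌊n/2⌋` disjoint pairs `{2i, 2i+1}`. As `d < ⌊n/2⌋`, some pair is pure; its first item
`u` is then a known non-defective, so testing `{u, x}` tests `x` alone. If the number `p` of
contaminated pairs equals `d`, each of them holds exactly one defective, and testing the first
item of each settles it with `d ≤ 2d - 3` tests. Otherwise `p < d`: test individually all but one
of the `2p + n % 2` items outside the pure pairs; whether the remaining one is defective follows
from the count `d`. This costs at most `2(d - 1) + n % 2 - 1` tests, and `⌊n/2⌋ + n % 2 = ⌈n/2⌉`.
-/
namespace GTTree

variable {n : ℕ} {α : Type*}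

def testEach (test : α → Finset (Fin n)) : List α → (List α → GTTree n) → GTTree n
  | [], k => k []
  | a :: l, k => .node (test a) (testEach test l fun c => k (a :: c)) (testEach test l k)

theorem run_testEach (test : α → Finset (Fin n)) (l : List α) (k : List α → GTTree n)
    (D : Finset (Fin n)) :
    (testEach test l k).run D = (k (l.filter fun a => (test a ∩ D).Nonempty)).run D := by
  induction l generalizing k with
  | nil => rfl
  | cons a l ih => by_cases h : (test a ∩ D).Nonempty <;> simp [testEach, run, h, ih]

theorem depth_testEach (test : α → Finset (Fin n)) (l : List α) (k : List α → GTTree n) (m : ℕ)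
    (hk : ∀ c ⊆ l, (k c).depth ≤ m) : (testEach test l k).depth ≤ l.length + m := by
  induction l generalizing k with
  | nil => simpa [testEach] using hk [] (List.Subset.refl _)
  | cons a l ih =>
    have hpos := ih (fun c => k (a :: c)) fun c hc => hk _ (List.cons_subset_cons a hc)
    have hneg := ih k fun c hc => hk c (List.subset_cons_of_subset a hc)
    simp only [testEach, depth, List.length_cons]
    omega

theorem sizeK_testEach (test : α → Finset (Fin n)) (l : List α) (k : List α → GTTree n) (s : ℕ)
    (htest : ∀ a ∈ l, (test a).card = s) (hk : ∀ c ⊆ l, (k c).SizeK s) :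
    (testEach test l k).SizeK s := by
  induction l generalizing k with
  | nil => exact hk [] (List.Subset.refl _)
  | cons a l ih =>
    have htest' : ∀ b ∈ l, (test b).card = s := fun b hb => htest b (List.mem_cons_of_mem a hb)
    exact ⟨htest a List.mem_cons_self,
      ih _ htest' fun c hc => hk _ (List.cons_subset_cons a hc),
      ih k htest' fun c hc => hk c (List.subset_cons_of_subset a hc)⟩

def probeWith (u : Fin n) : List (Fin n) → (List (Fin n) → GTTree n) → GTTree n :=
  testEach fun x => {u, x}

theorem run_probeWith {u : Fin n} {D : Finset (Fin n)} (hu : u ∉ D) (l : List (Fin n))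
    (k : List (Fin n) → GTTree n) :
    (probeWith u l k).run D = (k (l.filter (· ∈ D))).run D := by
  have hpair : ∀ x, ({u, x} ∩ D).Nonempty ↔ x ∈ D := fun x => by
    simp [Finset.Nonempty, hu]
  rw [probeWith, run_testEach]
  simp only [hpair]

theorem depth_probeWith (u : Fin n) (l : List (Fin n)) (g : List (Fin n) → Finset (Fin n)) :
    (probeWith u l fun s => leaf (g s)).depth ≤ l.length :=
  depth_testEach _ l _ 0 fun _ _ => le_rfl

theorem sizeK_probeWith {u : Fin n} {l : List (Fin n)} (hu : u ∉ l)
    (g : List (Fin n) → Finset (Fin n)) : (probeWith u l fun s => leaf (g s)).SizeK 2 :=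
  sizeK_testEach _ l _ 2 (fun _ hx => Finset.card_pair fun h => hu (h ▸ hx)) fun _ _ => trivial

end GTTree

section Decoding

variable {α : Type*} [DecidableEq α]

def completeByCount (d : ℕ) (b : α) (s : List α) : Finset α :=
  if s.length < d then insert b s.toFinset else s.toFinset

theorem completeByCount_filter {b : α} {l : List α} (hbl : (b :: l).Nodup) {D : Finset α}
    (hD : D ⊆ insert b l.toFinset) : completeByCount D.card b (l.filter (· ∈ D)) = D := by
  have hb : b ∉ l := (List.nodup_cons.1 hbl).1
  have hfound : (l.filter (· ∈ D)).toFinset = D.erase b := by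
    ext x
    have := @hD x
    simp only [List.mem_toFinset, List.mem_filter, decide_eq_true_eq, Finset.mem_erase,
      Finset.mem_insert] at this ⊢
    constructor
    · rintro ⟨hxl, hxD⟩
      exact ⟨fun h => hb (h ▸ hxl), hxD⟩
    · rintro ⟨hxb, hxD⟩
      exact ⟨(this hxD).resolve_left hxb, hxD⟩
  have hlen : (l.filter (· ∈ D)).length = (D.erase b).card := by
    rw [← hfound, List.toFinset_card_of_nodup ((List.nodup_cons.1 hbl).2.filter _)]
  unfold completeByCount
  rw [hlen, hfound]
  by_cases hbD : b ∈ D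
  · rw [if_pos (Finset.card_erase_lt_of_mem hbD), Finset.insert_erase hbD]
  · rw [Finset.erase_eq_of_notMem hbD, if_neg (lt_irrefl _)]

end Decoding

namespace PairTesting

variable {n : ℕ}

def pairIndex (x : Fin n) : ℕ := x.val / 2

variable [NeZero n]

def pairFst (i : ℕ) : Fin n := Fin.ofNat n (2 * i)

def pairSnd (i : ℕ) : Fin n := Fin.ofNat n (2 * i + 1)

def pairSet (i : ℕ) : Finset (Fin n) := {pairFst i, pairSnd i}

theorem val_pairFst {i : ℕ} (hi : i < n / 2) : (pairFst i : Fin n).val = 2 * i :=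
  Nat.mod_eq_of_lt (by omega)

theorem val_pairSnd {i : ℕ} (hi : i < n / 2) : (pairSnd i : Fin n).val = 2 * i + 1 :=
  Nat.mod_eq_of_lt (by omega)

theorem pairIndex_pairFst {i : ℕ} (hi : i < n / 2) : pairIndex (pairFst i : Fin n) = i := by
  rw [pairIndex, val_pairFst hi]
  omega

theorem mem_pairSet {i : ℕ} (hi : i < n / 2) {x : Fin n} : x ∈ pairSet i ↔ pairIndex x = i := by
  simp only [pairSet, pairIndex, Finset.mem_insert, Finset.mem_singleton, Fin.ext_iff,
    val_pairFst hi, val_pairSnd hi]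
  omega

theorem card_pairSet {i : ℕ} (hi : i < n / 2) : (pairSet i : Finset (Fin n)).card = 2 :=
  Finset.card_pair fun h => by
    have := congrArg Fin.val h
    rw [val_pairFst hi, val_pairSnd hi] at this
    omega

/-- The items in no pair outside `c`; the unpaired last item of an odd `n` is always one. -/
def candidates (c : List ℕ) : Finset (Fin n) :=
  Finset.univ.filter fun x => pairIndex x ∈ c ∨ n / 2 ≤ pairIndex x

theorem card_candidates_le (c : List ℕ) :
    (candidates c : Finset (Fin n)).card ≤ 2 * c.length + n % 2 := by
  have hsub : (candidates c : Finset (Fin n)) ⊆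
      c.toFinset.biUnion pairSet ∪ (Finset.Ico (2 * (n / 2)) n).image (Fin.ofNat n) := by
    intro x hx
    simp only [candidates, Finset.mem_filter, Finset.mem_univ, true_and] at hx
    rcases lt_or_ge (pairIndex x) (n / 2) with hlt | hge
    · refine Finset.mem_union_left _ (Finset.mem_biUnion.2 ⟨pairIndex x, ?_, ?_⟩)
      · exact List.mem_toFinset.2 (hx.resolve_right hlt.not_ge)
      · exact (mem_pairSet hlt).2 rfl
    · refine Finset.mem_union_right _ (Finset.mem_image.2 ⟨x.val, ?_, Fin.ofNat_val_eq_self x⟩)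
      simp only [pairIndex] at hge
      exact Finset.mem_Ico.2 ⟨by omega, x.isLt⟩
  calc (candidates c).card
      ≤ (c.toFinset.biUnion pairSet).card + ((Finset.Ico (2 * (n / 2)) n).image _).card :=
        (Finset.card_le_card hsub).trans (Finset.card_union_le _ _)
    _ ≤ c.toFinset.card * 2 + (Finset.Ico (2 * (n / 2)) n).card :=
        add_le_add (Finset.card_biUnion_le_card_mul _ _ _ fun _ _ => Finset.card_le_two)
          Finset.card_image_le
    _ ≤ 2 * c.length + n % 2 := by
        have := List.toFinset_card_le c
        rw [Nat.card_Ico]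
        omega

def pickInPair (s : List (Fin n)) (i : ℕ) : Fin n :=
  if pairFst i ∈ s then pairFst i else pairSnd i

def contaminated (D : Finset (Fin n)) : List ℕ :=
  (List.range (n / 2)).filter fun i => (pairSet i ∩ D).Nonempty

variable {D : Finset (Fin n)}

theorem mem_contaminated {i : ℕ} : i ∈ contaminated D ↔ i < n / 2 ∧ i ∈ D.image pairIndex := by
  simp only [contaminated, List.mem_filter, List.mem_range, decide_eq_true_eq,
    Finset.mem_image]
  refine and_congr_right fun hi => ⟨fun ⟨x, hx⟩ => ?_, fun ⟨x, hxD, hxi⟩ => ?_⟩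
  · rw [Finset.mem_inter, mem_pairSet hi] at hx
    exact ⟨x, hx.2, hx.1⟩
  · exact ⟨x, Finset.mem_inter.2 ⟨(mem_pairSet hi).2 hxi, hxD⟩⟩

theorem nodup_contaminated : (contaminated D).Nodup :=
  List.nodup_range.filter _

theorem toFinset_contaminated_subset : (contaminated D).toFinset ⊆ D.image pairIndex :=
  fun _ hi => (mem_contaminated.1 (List.mem_toFinset.1 hi)).2

theorem length_contaminated_le : (contaminated D).length ≤ D.card := by
  rw [← List.toFinset_card_of_nodup nodup_contaminated]
  exact (Finset.card_le_card toFinset_contaminated_subset).trans Finset.card_image_le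

theorem exists_pure_of_card_lt (hD : D.card < n / 2) : ∃ j < n / 2, j ∉ contaminated D := by
  obtain ⟨j, hj, hjc⟩ := Finset.exists_mem_notMem_of_card_lt_card
    (s := (contaminated D).toFinset) (t := Finset.range (n / 2)) (by
      rw [Finset.card_range, List.toFinset_card_of_nodup nodup_contaminated]
      exact length_contaminated_le.trans_lt hD)
  exact ⟨j, Finset.mem_range.1 hj, fun h => hjc (List.mem_toFinset.2 h)⟩

theorem pairFst_notMem_of_notMem_contaminated {j : ℕ} (hj : j < n / 2)
    (hjc : j ∉ contaminated D) : pairFst j ∉ D := fun hu =>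
  hjc (mem_contaminated.2 ⟨hj, Finset.mem_image.2 ⟨_, hu, pairIndex_pairFst hj⟩⟩)

theorem subset_candidates_contaminated : D ⊆ candidates (contaminated D) := by
  intro x hx
  simp only [candidates, Finset.mem_filter, Finset.mem_univ, true_and]
  rcases lt_or_ge (pairIndex x) (n / 2) with hlt | hge
  · exact Or.inl (mem_contaminated.2 ⟨hlt, Finset.mem_image_of_mem _ hx⟩)
  · exact Or.inr hge

/-- When there are as many contaminated pairs as defectives, each contaminated pair holds exactly
one defective, so testing its first item tells which one. -/
theorem map_pickInPair_filter (hlen : (contaminated D).length = D.card) :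
    ((contaminated D).map (pickInPair (((contaminated D).map pairFst).filter (· ∈ D)))).toFinset
      = D := by
  set c := contaminated D
  set s : List (Fin n) := (c.map pairFst).filter (· ∈ D)
  have himage : D.image pairIndex = c.toFinset :=
    (Finset.eq_of_subset_of_card_le toFinset_contaminated_subset (by
      rw [List.toFinset_card_of_nodup nodup_contaminated, hlen]
      exact Finset.card_image_le)).symm
  have hinj : Set.InjOn pairIndex (D : Set (Fin n)) := Finset.card_image_iff.1 (by
    rw [himage, List.toFinset_card_of_nodup nodup_contaminated, hlen])
  have hpick : ∀ i ∈ c, pickInPair s i ∈ D ∧ pairIndex (pickInPair s i) = i := by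
    intro i hi
    have hi' := mem_contaminated.1 hi
    obtain ⟨y, hyD, hyi⟩ := Finset.mem_image.1 hi'.2
    have hy := (mem_pairSet hi'.1).2 hyi
    simp only [pairSet, Finset.mem_insert, Finset.mem_singleton] at hy
    have htested : pairFst i ∈ s ↔ pairFst i ∈ D := by
      simp [s, List.mem_filter, List.mem_map_of_mem hi]
    rw [pickInPair]
    split_ifs with hfst
    · exact ⟨htested.1 hfst, pairIndex_pairFst hi'.1⟩
    · obtain rfl | rfl := hy
      · exact absurd (htested.2 hyD) hfst
      · exact ⟨hyD, hyi⟩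
  ext x
  simp only [List.mem_toFinset, List.mem_map]
  constructor
  · rintro ⟨i, hi, rfl⟩
    exact (hpick i hi).1
  · intro hx
    have hxc : pairIndex x ∈ c := List.mem_toFinset.1 (himage ▸ Finset.mem_image_of_mem _ hx)
    exact ⟨pairIndex x, hxc, hinj (hpick _ hxc).1 hx (hpick _ hxc).2⟩

open GTTree

/-- Second stage, after the pairs listed in `c` were found contaminated: probe against the first
item of some pure pair. -/
noncomputable def finish (d : ℕ) (c : List ℕ) : GTTree n :=
  if h : ∃ j < n / 2, j ∉ c then
    if c.length = d then
      probeWith (pairFst h.choose) (c.map pairFst) fun s => leaf (c.map (pickInPair s)).toFinset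
    else if c.length < d then
      probeWith (pairFst h.choose) (candidates c).toList.tail
        fun s => leaf (completeByCount d ((candidates c).toList.headD 0) s)
    else leaf ∅
  else leaf ∅

noncomputable def pairStrategy (d : ℕ) : GTTree n :=
  testEach pairSet (List.range (n / 2)) (finish d)

theorem depth_finish {d : ℕ} (hd : 3 ≤ d) (c : List ℕ) :
    (finish d c : GTTree n).depth ≤ n % 2 + (2 * d - 3) := by
  unfold finish
  split_ifs
  · refine (depth_probeWith _ _ _).trans ?_
    rw [List.length_map]
    omega
  · refine (depth_probeWith _ _ _).trans ?_
    have := card_candidates_le (n := n) c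
    rw [List.length_tail, Finset.length_toList]
    omega
  all_goals exact Nat.zero_le _

theorem depth_pairStrategy {d : ℕ} (hd : 3 ≤ d) :
    (pairStrategy d : GTTree n).depth ≤ n / 2 + (n % 2 + (2 * d - 3)) := by
  simpa [pairStrategy] using
    depth_testEach pairSet (List.range (n / 2)) _ _ fun c _ => depth_finish hd c

theorem sizeK_finish (d : ℕ) {c : List ℕ} (hc : ∀ i ∈ c, i < n / 2) :
    (finish d c : GTTree n).SizeK 2 := by
  unfold finish
  split_ifs with hpure
  · refine sizeK_probeWith (fun hu => ?_) _
    obtain ⟨i, hi, hij⟩ := List.mem_map.1 hu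
    have := congrArg pairIndex hij
    rw [pairIndex_pairFst (hc i hi), pairIndex_pairFst hpure.choose_spec.1] at this
    exact hpure.choose_spec.2 (this ▸ hi)
  · refine sizeK_probeWith (fun hu => ?_) _
    have hmem := Finset.mem_toList.1 (List.mem_of_mem_tail hu)
    simp only [candidates, Finset.mem_filter, Finset.mem_univ, true_and,
      pairIndex_pairFst hpure.choose_spec.1] at hmem
    exact hmem.elim hpure.choose_spec.2 hpure.choose_spec.1.not_ge
  all_goals trivial

theorem sizeK_pairStrategy (d : ℕ) : (pairStrategy d : GTTree n).SizeK 2 :=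
  sizeK_testEach _ _ _ 2 (fun _ hi => card_pairSet (List.mem_range.1 hi))
    fun _ hc => sizeK_finish d fun _ hi => List.mem_range.1 (hc hi)

theorem solves_pairStrategy {d : ℕ} (hd : d < n / 2) : (pairStrategy d : GTTree n).Solves d := by
  intro D hD
  rw [pairStrategy, run_testEach]
  change (finish d (contaminated D)).run D = D
  have hpure := exists_pure_of_card_lt (hD ▸ hd)
  have hu := pairFst_notMem_of_notMem_contaminated hpure.choose_spec.1 hpure.choose_spec.2
  rw [finish, dif_pos hpure]
  rcases (hD ▸ length_contaminated_le).lt_or_eq with hlt | heq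
  · rw [if_neg hlt.ne, if_pos hlt, run_probeWith hu, run]
    have hK : D ⊆ (candidates (contaminated D)).toList.toFinset := by
      rw [Finset.toList_toFinset]
      exact subset_candidates_contaminated
    have hnodup := Finset.nodup_toList (candidates (contaminated D) : Finset (Fin n))
    cases hL : (candidates (contaminated D) : Finset (Fin n)).toList with
    | nil =>
      rw [hL, List.toFinset_nil, Finset.subset_empty] at hK
      rw [hK, Finset.card_empty] at hD
      omega
    | cons b l =>
      rw [hL, List.toFinset_cons] at hK
      rw [hL] at hnodup
      rw [List.tail_cons, List.headD_cons, ← hD]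
      exact completeByCount_filter hnodup hK
  · rw [if_pos heq, run_probeWith hu, run]
    exact map_pickInPair_filter (heq.trans hD.symm)

end PairTesting

theorem Nat.ceil_half (n : ℕ) : ⌈(n : ℚ) / 2⌉₊ = n / 2 + n % 2 := by
  obtain ⟨k, rfl | rfl⟩ := Nat.even_or_odd' n
  · rw [show ((2 * k : ℕ) : ℚ) / 2 = k by push_cast; ring, Nat.ceil_natCast]
    omega
  · rw [Nat.ceil_eq_iff (by omega), show (2 * k + 1) / 2 + (2 * k + 1) % 2 = k + 1 by omega]
    push_cast
    constructor <;> linarith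

theorem Mfix_le_depth {k d n : ℕ} {T : GTTree n} (hk : T.SizeK k) (hT : T.Solves d) :
    Mfix k d n ≤ T.depth :=
  sInf_le ⟨T, hk, hT, rfl⟩

theorem stmt18 (d n : ℕ) (h3 : 3 ≤ d) (hd : d ≤ n / 2 - 1) :
    Mfix 2 d n ≤ ((⌈(n : ℚ) / 2⌉₊ + 2 * d - 3 : ℕ) : ℕ∞) := by
  have : NeZero n := ⟨by omega⟩
  have hdepth := PairTesting.depth_pairStrategy (n := n) h3
  refine (Mfix_le_depth (PairTesting.sizeK_pairStrategy d)
    (PairTesting.solves_pairStrategy (by omega))).trans ?_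
  rw [Nat.ceil_half]
  exact_mod_cast hdepth.trans (by omega)
end
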